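/- Let G be a finite connected simple graph with positive edge weights, let k = {r,s} ∈ E(G) be an edge such that G − k is connected, and let P be a balanced injection vector. Let F denote the edge flows in G with injection P and F' the edge flows in G − k with the same injection P. Then for every oriented edge m = (a,b) ≠ k of G, the flow change satisfies F'_m − F_m = F_k · (N*(r, a→b, s) − N*(r, b→a, s)) / N*_{G−k}, where F_k is the flow on k in G before its removal, N*(r, a→b, s) is the sum of the weights of the spanning trees of G whose unique r–s path traverses edge {a,b} from a to b, and N*_{G−k} is the weighted spanning tree sum of G − k. Equivalently, LODF_{m,k} = (N*(r, a→b, s) − N*(r, b→a, s)) / N*_{G−k}. -/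

import Mathlib

open scoped Classical

/-- `T` is a spanning tree of `G`. -/
def IsSpanningTreeOf {V : Type*} (G T : SimpleGraph V) : Prop := T ≤ G ∧ T.IsTree

/-- The weight of a spanning tree: the product of the weights of its edges. -/
noncomputable def treeWeight {V : Type*} [Fintype V] [DecidableEq V]
    (w : Sym2 V → ℝ) (T : SimpleGraph V) : ℝ :=
  ∏ e ∈ T.edgeFinset, w e

/-- The (unique, since `T` is a tree) path in `T` from `s` to `t` traverses the
edge `{a,b}` in the direction from `a` to `b`. -/
def TraversesDir {V : Type*} (T : SimpleGraph V) (s t a b : V) : Prop :=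
  ∃ p : T.Walk s t, p.IsPath ∧ ∃ d ∈ p.darts, d.toProd = (a, b)

/-- `N*`: the sum of the weights of all spanning trees of `G`. -/
noncomputable def stSum {V : Type*} [Fintype V] [DecidableEq V]
    (G : SimpleGraph V) (w : Sym2 V → ℝ) : ℝ :=
  ∑ T ∈ Finset.univ.filter (fun T => IsSpanningTreeOf G T), treeWeight w T

/-- `N*(s, a→b, t)`: the sum of the weights of the spanning trees of `G` whose
unique `s`–`t` path traverses the edge `{a,b}` from `a` to `b`. -/
noncomputable def stSumDir {V : Type*} [Fintype V] [DecidableEq V]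
    (G : SimpleGraph V) (w : Sym2 V → ℝ) (s a b t : V) : ℝ :=
  ∑ T ∈ Finset.univ.filter (fun T => IsSpanningTreeOf G T ∧ TraversesDir T s t a b),
    treeWeight w T

/-- The weighted Laplacian `L = B W Bᵀ` of `G`, written out entrywise. -/
noncomputable def wLap {V : Type*} [Fintype V] [DecidableEq V]
    (G : SimpleGraph V) (w : Sym2 V → ℝ) : Matrix V V ℝ :=
  Matrix.of fun u v =>
    if u = v then ∑ x ∈ Finset.univ.filter (fun x => G.Adj u x), w s(u, x)
    else if G.Adj u v then -w s(u, v) else 0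

/-!
Write `H = G - k` and `N = N*_H`. Call a spanning forest of `H` with two trees, one containing
`r` and the other `s`, a two-forest, and let `g v` be the total weight of the two-forests in
which `v` lies in the tree of `r`. Deleting `{a,b}` from a spanning tree whose `r`–`s` path
crosses it from `a` to `b` is a bijection onto the two-forests with `a` on the side of `r` and
`b` on the side of `s`, dividing weights by `w_ab`; hence
`w_ab (g a - g b) = N*_H(r, a→b, s) - N*_H(r, b→a, s)`. Summed over the edges at a vertex `u`,
the right-hand side counts, tree by tree, how often the `r`–`s` path leaves `u` minus how often
it enters it, so `L_H g = N (e_r - e_s)`.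

On the other hand `L_G = L_H + w_k (e_r - e_s)(e_r - e_s)ᵀ`, so `L_H (V' - V) = F_k (e_r - e_s)`
and `V' - V - (F_k / N) g` lies in the kernel of `L_H`, which consists of the constants by the
maximum principle. Finally a spanning tree of `G` whose `r`–`s` path uses an edge `m ≠ k` cannot
contain `k`, so `N*_G(r, a→b, s) = N*_H(r, a→b, s)`.
-/

open Finset SimpleGraph
open scoped Matrix

section Laplacian

variable {V : Type*} [Fintype V] [DecidableEq V]

theorem wLap_mulVec_apply (H : SimpleGraph V) (w : Sym2 V → ℝ) (x : V → ℝ) (u : V) :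
    (wLap H w *ᵥ x) u = ∑ v ∈ univ.filter (H.Adj u), w s(u, v) * (x u - x v) := by
  have hrow : ∀ v, wLap H w u v * x v =
      (if u = v then (∑ y ∈ univ.filter (H.Adj u), w s(u, y)) * x u else 0) +
        if H.Adj u v then -(w s(u, v) * x v) else 0 := by
    intro v
    by_cases huv : u = v
    · subst huv; simp [wLap]
    · by_cases hadj : H.Adj u v <;> simp [wLap, huv, hadj]
  simp only [Matrix.mulVec, dotProduct, hrow, sum_add_distrib, sum_ite_eq, mem_univ, if_true,
    ← sum_filter, sum_mul, sum_neg_distrib, ← sub_eq_add_neg, ← sum_sub_distrib, mul_sub]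

theorem wLap_mulVec_eq_deleteEdges_add (G : SimpleGraph V) (w : Sym2 V → ℝ) {r s : V}
    (hrs : G.Adj r s) (x : V → ℝ) :
    wLap G w *ᵥ x = wLap (G.deleteEdges {s(r, s)}) w *ᵥ x +
      (w s(r, s) * (x r - x s)) • (Pi.single r 1 - Pi.single s 1) := by
  ext u
  have hsplit : ∀ v, (if G.Adj u v then w s(u, v) * (x u - x v) else 0) =
      (if (G.deleteEdges {s(r, s)}).Adj u v then w s(u, v) * (x u - x v) else 0) +
        if s(u, v) = s(r, s) then w s(u, v) * (x u - x v) else 0 := by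
    intro v
    by_cases he : s(u, v) = s(r, s)
    · have hadj : G.Adj u v := by rw [← mem_edgeSet, he]; exact hrs
      simp [he, hadj]
    · simp [he]
  simp only [Pi.add_apply, Pi.smul_apply, Pi.sub_apply, smul_eq_mul, wLap_mulVec_apply,
    sum_filter, hsplit, sum_add_distrib]
  congr 1
  · congr! -- the two sums differ only in their decidability instances
  rcases eq_or_ne u r with rfl | hur
  · simp [hrs.ne]
  rcases eq_or_ne u s with rfl | hus
  · simp [Sym2.eq_swap (a := r), hur]
    ring
  · have : ∀ v, s(u, v) ≠ s(r, s) := fun v he => by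
      rcases Sym2.eq_iff.1 he with ⟨h, -⟩ | ⟨h, -⟩ <;> contradiction
    simp [this, hur, hus]

theorem eq_of_wLap_mulVec_eq_zero {H : SimpleGraph V} {w : Sym2 V → ℝ}
    (hw : ∀ e ∈ H.edgeSet, 0 < w e) (hH : H.Preconnected) {x : V → ℝ}
    (hx : wLap H w *ᵥ x = 0) (a b : V) : x a = x b := by
  obtain ⟨m, -, hm⟩ := exists_max_image univ x ⟨a, mem_univ a⟩
  have hmax_adj : ∀ u v, H.Adj u v → x u = x m → x v = x m := by
    intro u v huv hu
    have hnonneg : ∀ y ∈ univ.filter (H.Adj u), 0 ≤ w s(u, y) * (x u - x y) :=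
      fun y hy => mul_nonneg (hw _ (mem_filter.1 hy).2).le
        (by linarith [hm y (mem_univ y)])
    have hsum : ∑ y ∈ univ.filter (H.Adj u), w s(u, y) * (x u - x y) = 0 := by
      rw [← wLap_mulVec_apply, hx, Pi.zero_apply]
    have hv := (sum_eq_zero_iff_of_nonneg hnonneg).1 hsum v (by simpa using huv)
    rcases mul_eq_zero.1 hv with h | h
    · exact absurd h (hw _ huv).ne'
    · linarith
  have hmax : ∀ v, x v = x m := fun v => by
    induction (reachable_iff_reflTransGen m v).1 (hH m v) with
    | refl => rfl
    | tail _ hadj ih => exact hmax_adj _ _ hadj ih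
  rw [hmax a, hmax b]

end Laplacian

theorem SimpleGraph.Reachable.reachable_deleteEdges_or {V : Type*} {G : SimpleGraph V}
    {x y : V} (h : G.Reachable x y) (a b : V) :
    (G.deleteEdges {s(a, b)}).Reachable x y ∨ (G.deleteEdges {s(a, b)}).Reachable a y ∨
      (G.deleteEdges {s(a, b)}).Reachable b y := by
  rw [reachable_iff_reflTransGen] at h
  induction h with
  | refl => exact Or.inl .rfl
  | @tail z y _ hzy ih =>
    by_cases he : s(z, y) = s(a, b)
    · rcases Sym2.eq_iff.1 he with ⟨-, rfl⟩ | ⟨-, rfl⟩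
      · exact Or.inr (Or.inr .rfl)
      · exact Or.inr (Or.inl .rfl)
    · have hzy' : (G.deleteEdges {s(a, b)}).Adj z y := by simp [hzy, he]
      exact ih.imp (·.trans hzy'.reachable)
        (Or.imp (·.trans hzy'.reachable) (·.trans hzy'.reachable))

section Traversal

variable {V : Type*} {T : SimpleGraph V} {r s a b : V}

theorem TraversesDir.adj (h : TraversesDir T r s a b) : T.Adj a b := by
  obtain ⟨-, -, ⟨_, hab⟩, -, rfl⟩ := h
  exact hab

theorem TraversesDir.reachable_deleteEdges (h : TraversesDir T r s a b) :
    (T.deleteEdges {s(a, b)}).Reachable r a ∧ (T.deleteEdges {s(a, b)}).Reachable b s := by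
  obtain ⟨p, hp, ⟨_, hab⟩, hd, rfl⟩ := h
  obtain ⟨p₁, p₂, rfl⟩ := (Walk.isSubwalk_toWalk_iff_mem_darts p hab).2 hd
  have hnodup := hp.isTrail.edges_nodup
  simp only [Walk.edges_append, hab.edges_toWalk, List.nodup_append, List.mem_append,
    List.mem_singleton] at hnodup
  simp only [reachable_deleteEdges_iff_exists_walk]
  exact ⟨⟨p₁, fun h => hnodup.1.2.2 _ h _ rfl rfl⟩,
    ⟨p₂, fun h => hnodup.2.2 _ (Or.inr rfl) _ h rfl⟩⟩

theorem SimpleGraph.IsAcyclic.not_reachable_deleteEdges (hT : T.IsAcyclic) (hab : T.Adj a b) :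
    ¬ (T.deleteEdges {s(a, b)}).Reachable a b :=
  isAcyclic_iff_forall_adj_isBridge.1 hT hab

theorem SimpleGraph.IsTree.traversesDir_iff (hT : T.IsTree) (hab : T.Adj a b) :
    TraversesDir T r s a b ↔
      (T.deleteEdges {s(a, b)}).Reachable r a ∧ (T.deleteEdges {s(a, b)}).Reachable b s := by
  refine ⟨TraversesDir.reachable_deleteEdges, fun ⟨hra, hbs⟩ => ?_⟩
  have hnab := hT.isAcyclic.not_reachable_deleteEdges hab
  obtain ⟨p, hp⟩ := hT.connected.exists_isPath r s
  have hmem : s(a, b) ∈ p.edges := by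
    by_contra hnot
    exact hnab (hra.symm.trans
      ((reachable_deleteEdges_iff_exists_walk.2 ⟨p, hnot⟩).trans hbs.symm))
  obtain ⟨d, hd, hde⟩ := List.mem_map.1 hmem
  rcases dart_edge_eq_mk'_iff.1 hde with hdab | hdba
  · exact ⟨p, hp, d, hd, hdab⟩
  · have hrb := (TraversesDir.reachable_deleteEdges ⟨p, hp, d, hd, hdba⟩).1
    rw [Sym2.eq_swap] at hrb
    exact absurd (hra.symm.trans hrb) hnab

theorem TraversesDir.edge_eq_of_adj (hT : T.IsAcyclic) (hrs : T.Adj r s)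
    (h : TraversesDir T r s a b) : s(a, b) = s(r, s) := by
  by_contra hne
  obtain ⟨hra, hbs⟩ := h.reachable_deleteEdges
  have hrs' : (T.deleteEdges {s(a, b)}).Adj r s := by simp [hrs, Ne.symm hne]
  exact hT.not_reachable_deleteEdges h.adj (hra.symm.trans (hrs'.reachable.trans hbs.symm))

end Traversal

section TwoForest

variable {V : Type*} {H F T : SimpleGraph V} {r s a b : V}

structure IsTwoForestOf (H F : SimpleGraph V) (r s : V) : Prop where
  le : F ≤ H
  isAcyclic : F.IsAcyclic
  not_reachable : ¬ F.Reachable r s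
  reachable_or (v : V) : F.Reachable r v ∨ F.Reachable s v

theorem IsTwoForestOf.reachable_iff_not_reachable (hF : IsTwoForestOf H F r s) (v : V) :
    F.Reachable v s ↔ ¬ F.Reachable r v :=
  ⟨fun hvs hrv => hF.not_reachable (hrv.trans hvs),
    fun h => ((hF.reachable_or v).resolve_left h).symm⟩

theorem IsSpanningTreeOf.isTwoForestOf_deleteEdges (hT : IsSpanningTreeOf H T)
    (h : TraversesDir T r s a b) : IsTwoForestOf H (T.deleteEdges {s(a, b)}) r s := by
  obtain ⟨hra, hbs⟩ := h.reachable_deleteEdges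
  refine ⟨(deleteEdges_le _).trans hT.1, hT.2.isAcyclic.anti (deleteEdges_le _),
    fun hrs => hT.2.isAcyclic.not_reachable_deleteEdges h.adj
      (hra.symm.trans (hrs.trans hbs.symm)), fun v => ?_⟩
  rcases (hT.2.connected a v).reachable_deleteEdges_or a b with hav | hav | hbv
  · exact Or.inl (hra.trans hav)
  · exact Or.inl (hra.trans hav)
  · exact Or.inr (hbs.symm.trans hbv)

theorem IsTwoForestOf.not_reachable_of_reachable (hF : IsTwoForestOf H F r s)
    (hra : F.Reachable r a) (hbs : F.Reachable b s) : ¬ F.Reachable a b :=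
  fun hab => hF.not_reachable (hra.trans (hab.trans hbs))

theorem IsTwoForestOf.isSpanningTreeOf_sup_edge_traversesDir (hF : IsTwoForestOf H F r s)
    (hab : H.Adj a b) (hra : F.Reachable r a) (hbs : F.Reachable b s) :
    IsSpanningTreeOf H (F ⊔ edge a b) ∧ TraversesDir (F ⊔ edge a b) r s a b := by
  have hnab := hF.not_reachable_of_reachable hra hbs
  have hab' : (F ⊔ edge a b).Adj a b := by simp [edge_adj, hab.ne]
  have hT : (F ⊔ edge a b).IsTree := by
    refine ⟨(connected_iff_exists_forall_reachable _).2 ⟨r, fun v => ?_⟩,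
      hF.isAcyclic.sup_edge_of_not_reachable hnab⟩
    rcases hF.reachable_or v with hrv | hsv
    · exact hrv.mono le_sup_left
    · exact (hra.mono le_sup_left).trans
        (hab'.reachable.trans ((hbs.trans hsv).mono le_sup_left))
  refine ⟨⟨sup_le hF.le ((edge_le_iff _).2 (Or.inr hab)), hT⟩,
    (hT.traversesDir_iff hab').2 ?_⟩
  have hdel : (F ⊔ edge a b).deleteEdges {s(a, b)} = F :=
    ((disjoint_edge _).2 fun h => hnab h.reachable).sup_sdiff_cancel_right
  rw [hdel]
  exact ⟨hra, hbs⟩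

end TwoForest

section TwoForestPotential

variable {V : Type*} [Fintype V] [DecidableEq V] {H : SimpleGraph V} {r s a b : V}

theorem treeWeight_sup_edge (w : Sym2 V → ℝ) {F : SimpleGraph V} (hne : a ≠ b)
    (hab : ¬ F.Adj a b) : treeWeight w (F ⊔ edge a b) = w s(a, b) * treeWeight w F := by
  unfold treeWeight
  rw [← prod_cons (by simpa using hab : s(a, b) ∉ F.edgeFinset)]
  congr 1
  convert edgeFinset_sup_edge F hab hne

theorem stSumDir_eq_mul_sum_isTwoForestOf (w : Sym2 V → ℝ) (hab : H.Adj a b) :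
    stSumDir H w r a b s = w s(a, b) * ∑ F ∈ univ.filter
      (fun F => IsTwoForestOf H F r s ∧ F.Reachable r a ∧ F.Reachable b s), treeWeight w F := by
  rw [stSumDir, mul_sum]
  -- `T.deleteEdges {s(a, b)}` is `T \ edge a b` by definition, hence the lattice lemmas below.
  refine sum_nbij' (fun T => T.deleteEdges {s(a, b)}) (fun F => F ⊔ edge a b) ?_ ?_ ?_ ?_ ?_
  · simp only [mem_filter, mem_univ, true_and]
    exact fun T ⟨hT, h⟩ => ⟨hT.isTwoForestOf_deleteEdges h, h.reachable_deleteEdges⟩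
  · simp only [mem_filter, mem_univ, true_and]
    exact fun F ⟨hF, hra, hbs⟩ => hF.isSpanningTreeOf_sup_edge_traversesDir hab hra hbs
  · simp only [mem_filter, mem_univ, true_and]
    exact fun T ⟨_, h⟩ => sdiff_sup_cancel ((edge_le_iff _).2 (Or.inr h.adj))
  · simp only [mem_filter, mem_univ, true_and]
    exact fun F ⟨hF, hra, hbs⟩ => ((disjoint_edge _).2 fun h =>
      hF.not_reachable_of_reachable hra hbs h.reachable).sup_sdiff_cancel_right
  · simp only [mem_filter, mem_univ, true_and]
    intro T ⟨_, h⟩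
    conv_lhs => rw [← sdiff_sup_cancel ((edge_le_iff T).2 (Or.inr h.adj))]
    exact treeWeight_sup_edge w hab.ne (by simp [edge_adj, hab.ne])

/-- The potential of `v` for a unit current from `r` to `s`, up to the factor `stSum H w`. -/
noncomputable def twoForestPotential (H : SimpleGraph V) (w : Sym2 V → ℝ) (r s v : V) : ℝ :=
  ∑ F ∈ univ.filter (fun F => IsTwoForestOf H F r s ∧ F.Reachable r v), treeWeight w F

theorem stSumDir_sub_stSumDir (w : Sym2 V → ℝ) (hab : H.Adj a b) :
    stSumDir H w r a b s - stSumDir H w r b a s =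
      w s(a, b) * (twoForestPotential H w r s a - twoForestPotential H w r s b) := by
  rw [stSumDir_eq_mul_sum_isTwoForestOf w hab, stSumDir_eq_mul_sum_isTwoForestOf w hab.symm,
    Sym2.eq_swap, ← mul_sub, twoForestPotential, twoForestPotential]
  simp only [sum_filter, ← sum_sub_distrib]
  congr 2 with F
  by_cases hF : IsTwoForestOf H F r s
  · simp only [hF, true_and, hF.reachable_iff_not_reachable]
    by_cases hra : F.Reachable r a <;> by_cases hrb : F.Reachable r b <;> simp [hra, hrb]
  · simp [hF]

end TwoForestPotential

section Kirchhoff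

variable {V : Type*} [Fintype V] [DecidableEq V]

theorem SimpleGraph.Walk.sum_count_darts_sub {G : SimpleGraph V} {x y : V} (p : G.Walk x y)
    (u : V) :
    ∑ v, (((p.darts.map Dart.toProd).count (u, v) : ℝ) -
      (p.darts.map Dart.toProd).count (v, u)) =
      (Pi.single x 1 - Pi.single y 1 : V → ℝ) u := by
  induction p with
  | nil => simp
  | @cons x z y h q ih =>
    have hout :
        ∑ v, (if (x, z) = (u, v) then 1 else 0 : ℝ) = (Pi.single x 1 : V → ℝ) u := by
      rcases eq_or_ne u x with rfl | hxu
      · simp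
      · simp [hxu, hxu.symm]
    have hin : ∑ v, (if (x, z) = (v, u) then 1 else 0 : ℝ) = (Pi.single z 1 : V → ℝ) u := by
      rcases eq_or_ne u z with rfl | hzu
      · simp
      · simp [hzu, hzu.symm]
    simp only [Walk.darts_cons, List.map_cons, List.count_cons, beq_iff_eq, Nat.cast_add,
      Nat.cast_ite, Nat.cast_one, Nat.cast_zero]
    have hsplit : (Pi.single x 1 - Pi.single y 1 : V → ℝ) u =
        (Pi.single z 1 - Pi.single y 1 : V → ℝ) u +
          ((Pi.single x 1 : V → ℝ) u - (Pi.single z 1 : V → ℝ) u) := by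
      simp only [Pi.sub_apply]; ring
    rw [hsplit, ← ih, ← hout, ← hin, ← sum_sub_distrib, ← sum_add_distrib]
    exact sum_congr rfl fun v _ => by ring

theorem SimpleGraph.IsTree.sum_traversesDir_sub {T : SimpleGraph V} (hT : T.IsTree) (r s u : V) :
    ∑ v, ((if TraversesDir T r s u v then 1 else 0) -
      (if TraversesDir T r s v u then 1 else 0) : ℝ) =
      (Pi.single r 1 - Pi.single s 1 : V → ℝ) u := by
  obtain ⟨p, hp⟩ := hT.connected.exists_isPath r s
  have htrav : ∀ x y, TraversesDir T r s x y ↔ (x, y) ∈ p.darts.map Dart.toProd := by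
    refine fun x y => ⟨fun ⟨q, hq, d, hd, hdxy⟩ => ?_, fun h => ?_⟩
    · obtain rfl : q = p :=
        congrArg Subtype.val ((hT.isAcyclic.subsingleton_path r s).elim ⟨q, hq⟩ ⟨p, hp⟩)
      exact List.mem_map.2 ⟨d, hd, hdxy⟩
    · obtain ⟨d, hd, hdxy⟩ := List.mem_map.1 h
      exact ⟨p, hp, d, hd, hdxy⟩
  have hnodup : (p.darts.map Dart.toProd).Nodup :=
    (Walk.darts_nodup_of_support_nodup hp.support_nodup).map Dart.toProd_injective
  simp only [← p.sum_count_darts_sub u, hnodup.count, htrav, Nat.cast_ite, Nat.cast_one,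
    Nat.cast_zero]

theorem sum_stSumDir_sub (H : SimpleGraph V) (w : Sym2 V → ℝ) (r s u : V) :
    ∑ v ∈ univ.filter (H.Adj u), (stSumDir H w r u v s - stSumDir H w r v u s) =
      stSum H w * (Pi.single r 1 - Pi.single s 1 : V → ℝ) u := by
  have htree : ∀ T ∈ univ.filter (IsSpanningTreeOf H),
      ∑ v ∈ univ.filter (H.Adj u), ((if TraversesDir T r s u v then treeWeight w T else 0) -
        if TraversesDir T r s v u then treeWeight w T else 0) =
      treeWeight w T * (Pi.single r 1 - Pi.single s 1 : V → ℝ) u := by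
    intro T hT
    obtain ⟨hTH, hT⟩ := (mem_filter.1 hT).2
    rw [← hT.sum_traversesDir_sub r s u, mul_sum]
    refine (sum_subset (filter_subset _ _) fun v _ hv => ?_).trans
      (sum_congr rfl fun v _ => by split_ifs <;> ring)
    have hnadj : ¬ H.Adj u v := by simpa using hv
    rw [if_neg fun h => hnadj (hTH h.adj), if_neg fun h => hnadj (hTH h.adj).symm, sub_zero]
  have hdir : ∀ a b, stSumDir H w r a b s = ∑ T ∈ univ.filter (IsSpanningTreeOf H),
      if TraversesDir T r s a b then treeWeight w T else 0 := fun a b => by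
    rw [stSumDir, ← filter_filter, sum_filter]
  simp only [hdir, ← sum_sub_distrib]
  rw [sum_comm, stSum, sum_mul]
  exact sum_congr rfl htree

end Kirchhoff

section Outage

variable {V : Type*} [Fintype V] [DecidableEq V]

theorem wLap_mulVec_twoForestPotential (H : SimpleGraph V) (w : Sym2 V → ℝ) (r s : V) :
    wLap H w *ᵥ twoForestPotential H w r s = stSum H w • (Pi.single r 1 - Pi.single s 1) := by
  ext u
  rw [wLap_mulVec_apply, Pi.smul_apply, smul_eq_mul, ← sum_stSumDir_sub]
  exact sum_congr rfl fun v hv => (stSumDir_sub_stSumDir w (mem_filter.1 hv).2).symm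

theorem stSumDir_deleteEdges {G : SimpleGraph V} (w : Sym2 V → ℝ) {r s a b : V}
    (hne : s(a, b) ≠ s(r, s)) :
    stSumDir (G.deleteEdges {s(r, s)}) w r a b s = stSumDir G w r a b s := by
  unfold stSumDir
  congr 1
  ext T
  simp only [mem_filter, mem_univ, true_and]
  refine ⟨fun ⟨⟨hTH, hT⟩, h⟩ => ⟨⟨hTH.trans (deleteEdges_le _), hT⟩, h⟩,
    fun ⟨⟨hTG, hT⟩, h⟩ => ⟨⟨fun x y hxy => ?_, hT⟩, h⟩⟩
  rw [deleteEdges_adj, Set.mem_singleton_iff]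
  refine ⟨hTG hxy, fun hxy_rs => hne (h.edge_eq_of_adj hT.isAcyclic ?_)⟩
  rw [← mem_edgeSet, ← hxy_rs]
  exact hxy

theorem stSum_pos {H : SimpleGraph V} {w : Sym2 V → ℝ} (hw : ∀ e ∈ H.edgeSet, 0 < w e)
    (hH : H.Connected) : 0 < stSum H w := by
  obtain ⟨T, hTH, hT⟩ := hH.exists_isTree_le
  refine sum_pos (fun T' hT' => prod_pos fun e he => hw e ?_)
    ⟨T, mem_filter.2 ⟨mem_univ _, hTH, hT⟩⟩
  exact edgeSet_mono (mem_filter.1 hT').2.1 (mem_edgeFinset.1 he)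

end Outage

theorem lodf_eq_spanning_tree_ratio_general
    {V : Type*} [Fintype V] [DecidableEq V] (G : SimpleGraph V)
    (w : Sym2 V → ℝ) (hw : ∀ e ∈ G.edgeSet, 0 < w e)
    (r s : V) (hrs : G.Adj r s)
    (hGk : (G.deleteEdges {s(r, s)}).Connected)
    (P : V → ℝ)
    (Vp : V → ℝ) (hVp : Matrix.mulVec (wLap G w) Vp = P)
    (Vp' : V → ℝ) (hVp' : Matrix.mulVec (wLap (G.deleteEdges {s(r, s)}) w) Vp' = P) :
    ∀ a b : V, G.Adj a b → s(a, b) ≠ s(r, s) →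
      w s(a, b) * (Vp' a - Vp' b) - w s(a, b) * (Vp a - Vp b) =
        (w s(r, s) * (Vp r - Vp s)) *
          ((stSumDir G w r a b s - stSumDir G w r b a s) /
            stSum (G.deleteEdges {s(r, s)}) w) := by
  intro a b hab hne
  set H := G.deleteEdges {s(r, s)}
  have hHab : H.Adj a b := by simp [H, hab, hne]
  have hne' : s(b, a) ≠ s(r, s) := by rwa [Sym2.eq_swap]
  rw [← stSumDir_deleteEdges (G := G) w hne, ← stSumDir_deleteEdges (G := G) w hne',
    stSumDir_sub_stSumDir w hHab]
  set g := twoForestPotential H w r s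
  set Fk := w s(r, s) * (Vp r - Vp s)
  have hwH : ∀ e ∈ H.edgeSet, 0 < w e := fun e he => hw e (edgeSet_mono (deleteEdges_le _) he)
  have hN : stSum H w ≠ 0 := (stSum_pos hwH hGk).ne'
  have hker : wLap H w *ᵥ (Vp' - Vp - (Fk / stSum H w) • g) = 0 := by
    rw [Matrix.mulVec_sub, Matrix.mulVec_sub, Matrix.mulVec_smul, wLap_mulVec_twoForestPotential,
      hVp', ← hVp, wLap_mulVec_eq_deleteEdges_add G w hrs, smul_smul, div_mul_cancel₀ _ hN]
    abel
  have hconst := eq_of_wLap_mulVec_eq_zero hwH hGk.preconnected hker a b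
  simp only [Pi.sub_apply, Pi.smul_apply, smul_eq_mul] at hconst
  calc w s(a, b) * (Vp' a - Vp' b) - w s(a, b) * (Vp a - Vp b)
      = w s(a, b) * (Fk / stSum H w * (g a - g b)) := by linear_combination w s(a, b) * hconst
    _ = Fk * (w s(a, b) * (g a - g b) / stSum H w) := by ring

/-- **Spanning-tree formula for line outage distribution factors.**  Let `G` be
a finite connected simple graph with positive edge weights, let `k = {r,s}` be
an edge of `G` with `G - k` connected, and let `P` be a balanced injection
vector.  Let `F` be the flows in `G` with injection `P` (potential `Vp`) and
`F'` the flows in `G - k` with the same injection (potential `Vp'`).  Then for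
every oriented edge `m = (a,b) ≠ k` of `G`,
`F'_m - F_m = F_k · (N*(r, a→b, s) - N*(r, b→a, s)) / N*_{G-k}`,
i.e. `LODF_{m,k} = (N*(r, a→b, s) - N*(r, b→a, s)) / N*_{G-k}`. -/
theorem lodf_eq_spanning_tree_ratio
    {V : Type*} [Fintype V] [DecidableEq V] (G : SimpleGraph V)
    (w : Sym2 V → ℝ) (hw : ∀ e ∈ G.edgeSet, 0 < w e)
    (hG : G.Connected) (r s : V) (hrs : G.Adj r s)
    (hGk : (G.deleteEdges {s(r, s)}).Connected)
    (P : V → ℝ) (hP : ∑ u, P u = 0)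
    (Vp : V → ℝ) (hVp : Matrix.mulVec (wLap G w) Vp = P)
    (Vp' : V → ℝ) (hVp' : Matrix.mulVec (wLap (G.deleteEdges {s(r, s)}) w) Vp' = P) :
    ∀ a b : V, G.Adj a b → s(a, b) ≠ s(r, s) →
      w s(a, b) * (Vp' a - Vp' b) - w s(a, b) * (Vp a - Vp b) =
        (w s(r, s) * (Vp r - Vp s)) *
          ((stSumDir G w r a b s - stSumDir G w r b a s) /
            stSum (G.deleteEdges {s(r, s)}) w) :=
  lodf_eq_spanning_tree_ratio_general G w hw r s hrs hGk P Vp hVp Vp' hVp'
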